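/- Let R = k[ε]/(ε³) for a field k of characteristic 0. Then for any f, g ∈ k((t)), the Contou-Carrère symbol satisfies (1 + εf, 1 + εg) = 1 + ε²·res(f dg). -/
import Mathlib


noncomputable section

namespace CC

variable {R : Type*} [CommRing R]

/-- Formal derivative of a Laurent series. -/
def DerivT (f : LaurentSeries R) : LaurentSeries R where
  coeff n := (n + 1) • f.coeff (n + 1)
  isPWO_support' := by
    have hsub : Function.support (fun n : ℤ => (n + 1) • f.coeff (n + 1)) ⊆
        (fun n : ℤ => n - 1) '' Function.support f.coeff := by
      intro n hn
      have h1 : (n + 1) • f.coeff (n + 1) ≠ 0 := hn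
      have h2 : f.coeff (n + 1) ≠ 0 := fun h => h1 (by rw [h, smul_zero])
      exact ⟨n + 1, h2, by ring⟩
    have hmono : Monotone fun n : ℤ => n - 1 := fun a b h => by dsimp only; omega
    exact (Set.IsPWO.image_of_monotoneOn f.isPWO_support' (hmono.monotoneOn _)).mono hsub

@[simp] lemma DerivT_coeff (f : LaurentSeries R) (n : ℤ) :
    (DerivT f).coeff n = (n + 1) • f.coeff (n + 1) := rfl

/-- Coefficientwise map of Laurent series along a ring homomorphism. -/
def mapLS {S : Type*} [CommRing S] (ψ : R →+* S) (x : LaurentSeries R) : LaurentSeries S where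
  coeff n := ψ (x.coeff n)
  isPWO_support' := by
    refine x.isPWO_support'.mono ?_
    intro n hn
    have h1 : ψ (x.coeff n) ≠ 0 := hn
    exact fun h => h1 (by rw [h, map_zero])

/-- The ring `k[ε]/(ε³)`. -/
abbrev A3 (k : Type*) [Field k] : Type _ :=
  Polynomial k ⧸ Ideal.span {(Polynomial.X : Polynomial k) ^ 3}

/-- The class of `ε` in `k[ε]/(ε³)`. -/
def eps3 (k : Type*) [Field k] : A3 k :=
  Ideal.Quotient.mk _ Polynomial.X

section Aux

variable {S : Type*} [CommRing S] (ψ : R →+* S)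

lemma mapLS_eq (x : LaurentSeries R) : mapLS ψ x = x.map ψ.toNonUnitalRingHom := rfl

lemma mapLS_mul (a b : LaurentSeries R) :
    mapLS ψ (a * b) = mapLS ψ a * mapLS ψ b := by
  rw [mapLS_eq, mapLS_eq, mapLS_eq, HahnSeries.map_mul]

lemma C_mul_coeff (a : R) (x : LaurentSeries R) (n : ℤ) :
    (HahnSeries.C a * x).coeff n = a * x.coeff n := by
  simpa using HahnSeries.single_mul_coeff_add (r := a) (x := x) (a := n) (b := 0)

lemma DerivT_one : DerivT (1 : LaurentSeries R) = 0 := by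
  ext n
  rcases eq_or_ne n (-1) with rfl | h
  · simp
  · simp [HahnSeries.coeff_one, show n + 1 ≠ 0 by omega]

lemma DerivT_add (a b : LaurentSeries R) : DerivT (a + b) = DerivT a + DerivT b := by
  ext n; simp [smul_add]

lemma DerivT_C_mul (a : R) (x : LaurentSeries R) :
    DerivT (HahnSeries.C a * x) = HahnSeries.C a * DerivT x := by
  ext n
  simp only [DerivT_coeff, C_mul_coeff, zsmul_eq_mul]
  push_cast
  ring

lemma DerivT_mapLS (x : LaurentSeries R) :
    DerivT (mapLS ψ x) = mapLS ψ (DerivT x) := by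
  ext n
  simp [mapLS, map_zsmul]

lemma smul_LS {k A : Type*} [CommSemiring k] [CommRing A] [Algebra k A]
    (c : k) (z : LaurentSeries A) :
    c • z = HahnSeries.C (algebraMap k A c) * z := by
  ext n
  rw [HahnSeries.coeff_smul, C_mul_coeff, Algebra.smul_def]

lemma eps3_cube (k : Type*) [Field k] : (eps3 k) ^ 3 = 0 := by
  rw [eps3, ← map_pow]
  exact Ideal.Quotient.eq_zero_iff_mem.mpr (Ideal.subset_span rfl)

end Aux

set_option maxHeartbeats 2000000 in
set_option synthInstance.maxHeartbeats 1000000 in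
/-- **The Contou-Carrère symbol as a deformation of the residue (one-dimensional case).**
Let `k` be a field of characteristic `0` and `R = k[ε]/(ε³)`.  For any `f, g ∈ k((t))`, the
Contou-Carrère symbol, given over a `ℚ`-algebra by `(F,G) = exp res(log F · dG/G)`,
satisfies `(1 + εf, 1 + εg) = 1 + ε²·res(f dg)`.  Here `log(1+x)` is the (finite, since
`x` is nilpotent) series `∑_{p≥1} (−1)^{p+1} x^p/p`, `G⁻¹` is the inverse of `G = 1 + εg`,
`exp r = ∑_k r^k/k!` (a finite stabilized sum, `r` being nilpotent), and
`res` takes the coefficient of `t⁻¹ dt`. -/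
theorem contouCarrere_deformation_residue
    {k : Type*} [Field k] [CharZero k] (f g : LaurentSeries k)
    (x y : LaurentSeries (A3 k))
    (hx : x = HahnSeries.C (eps3 k) * mapLS (algebraMap k (A3 k)) f)
    (hy : y = HahnSeries.C (eps3 k) * mapLS (algebraMap k (A3 k)) g)
    (LF : LaurentSeries (A3 k))
    (hLF : ∀ n : ℕ, x ^ n = 0 →
      LF = ∑ p ∈ Finset.Icc 1 n, (algebraMap ℚ k ((-1) ^ (p + 1) * (p : ℚ)⁻¹)) • x ^ p)
    (Ginv : LaurentSeries (A3 k)) (hGinv : (1 + y) * Ginv = 1) :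
    letI r : A3 k := (LF * DerivT (1 + y) * Ginv).coeff (-1)
    IsNilpotent r ∧
      ∀ n : ℕ, r ^ n = 0 →
        (∑ m ∈ Finset.range n, (algebraMap ℚ k ((m.factorial : ℚ)⁻¹)) • r ^ m) =
          1 + eps3 k ^ 2 * algebraMap k (A3 k) ((f * DerivT g).coeff (-1)) := by
  set φ := algebraMap k (A3 k)
  set e : LaurentSeries (A3 k) := HahnSeries.C (eps3 k) with he
  set F : LaurentSeries (A3 k) := mapLS φ f with hF
  set G : LaurentSeries (A3 k) := mapLS φ g with hG
  have he3 : e ^ 3 = 0 := by rw [he, ← map_pow, eps3_cube, map_zero]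
  have hx3 : x ^ 3 = 0 := by
    linear_combination (x ^ 2 + x * (e * F) + (e * F) ^ 2) * hx + F ^ 3 * he3
  -- LF = x + c₂ • x²
  have hLF3 := hLF 3 hx3
  have hIcc : Finset.Icc (1 : ℕ) 3 = {1, 2, 3} := rfl
  rw [hIcc, Finset.sum_insert (by decide), Finset.sum_insert (by decide),
    Finset.sum_singleton, hx3, smul_zero, add_zero] at hLF3
  have hLFe : LF = x + (algebraMap ℚ k ((-1) ^ (2 + 1) * (2 : ℚ)⁻¹)) • x ^ 2 := by
    rw [hLF3]
    norm_num
  -- the derivative term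
  have hD : DerivT (1 + y) = e * mapLS φ (DerivT g) := by
    rw [DerivT_add, DerivT_one, zero_add, hy, DerivT_C_mul, DerivT_mapLS]
  set D : LaurentSeries (A3 k) := mapLS φ (DerivT g) with hDdef
  -- vanishing facts
  have hex2 : x ^ 2 * (e * D) = 0 := by
    linear_combination ((x + e * F) * (e * D)) * hx + (F ^ 2 * D) * he3
  set Cc : LaurentSeries (A3 k) :=
    HahnSeries.C (φ (algebraMap ℚ k ((-1) ^ (2 + 1) * (2 : ℚ)⁻¹))) with hCc
  have hLFe' : LF = x + Cc * x ^ 2 := by rw [hLFe, smul_LS]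
  have hM : mapLS φ (f * DerivT g) = F * D := mapLS_mul φ f (DerivT g)
  have hLFD : LF * DerivT (1 + y) = e ^ 2 * mapLS φ (f * DerivT g) := by
    rw [hLFe', hD, hM, hx]
    linear_combination (Cc * F ^ 2 * D) * he3
  have hey : e ^ 2 * y = 0 := by
    linear_combination e ^ 2 * hy + G * he3
  have hginv : e ^ 2 * Ginv = e ^ 2 := by
    linear_combination e ^ 2 * hGinv - Ginv * hey
  have hP : LF * DerivT (1 + y) * Ginv = e ^ 2 * mapLS φ (f * DerivT g) := by
    linear_combination Ginv * hLFD + mapLS φ (f * DerivT g) * hginv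
  set r : A3 k := (LF * DerivT (1 + y) * Ginv).coeff (-1) with hrdef
  have he2 : e ^ 2 = HahnSeries.C (eps3 k ^ 2) :=
    (map_pow (HahnSeries.C : A3 k →+* HahnSeries ℤ (A3 k)) (eps3 k) 2).symm
  have hr : r = eps3 k ^ 2 * φ ((f * DerivT g).coeff (-1)) := by
    rw [hrdef, hP, he2]
    exact C_mul_coeff _ _ _
  have hr2 : r ^ 2 = 0 := by
    rw [hr]
    linear_combination (eps3 k * φ ((f * DerivT g).coeff (-1)) ^ 2) * eps3_cube k
  refine ⟨⟨2, hr2⟩, ?_⟩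
  intro n hn
  rw [← hr]
  have key : ∀ m : ℕ, 2 ≤ m →
      (∑ i ∈ Finset.range m, (algebraMap ℚ k ((i.factorial : ℚ)⁻¹)) • r ^ i) = 1 + r := by
    intro m hm
    induction m with
    | zero => omega
    | succ p ih =>
      rcases Nat.lt_or_ge p 2 with h | h
      · have hp1 : p = 1 := by omega
        subst hp1
        rw [Finset.sum_range_succ, Finset.sum_range_one]
        norm_num
      · rw [Finset.sum_range_succ, ih (by omega)]
        have hrp : r ^ p = 0 := by
          rw [show r ^ p = r ^ 2 * r ^ (p - 2) by rw [← pow_add]; congr 1; omega,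
            hr2, zero_mul]
        rw [hrp, smul_zero, add_zero]
  match n with
  | 0 =>
      rw [pow_zero] at hn
      have : Subsingleton (A3 k) := subsingleton_of_zero_eq_one hn.symm
      exact Subsingleton.elim _ _
  | 1 =>
      rw [pow_one] at hn
      rw [Finset.sum_range_one, hn]
      norm_num
  | (m + 2) => exact key (m + 2) (by omega)

end CC
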